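/- Applying an equation to a pair automaton (i.e., adding the epsilon-transitions (q1,p1) →^E (q2,p1) and (q2,p1) →^E (q1,p1) arising from a situation of application of an equation, together with the corresponding transitions for other right components) preserves consistency with A_IRR(R). -/

import Mathlib

namespace TAC

/-! ### Terms -/

inductive Term (F V : Type) : Type where
  | var : V → Term F V
  | app : F → List (Term F V) → Term F V

namespace Term

def subst {F V W : Type} (σ : V → Term F W) : Term F V → Term F W
  | .var v => σ v
  | .app f ts => .app f (ts.attach.map (fun ⟨t, _⟩ => t.subst σ))

def holes {F V : Type} : Term F (Option V) → ℕ
  | .var none => 1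
  | .var (some _) => 0
  | .app _ ts => (ts.attach.map (fun ⟨t, _⟩ => t.holes)).sum

def varsL {F V : Type} : Term F V → List V
  | .var v => [v]
  | .app _ ts => (ts.attach.map (fun ⟨t, _⟩ => t.varsL)).flatten

/-- Subterm relation. -/
inductive Sub {F V : Type} : Term F V → Term F V → Prop where
  | refl (t : Term F V) : Sub t t
  | child {u t : Term F V} {ts : List (Term F V)} (f : F) :
      t ∈ ts → Sub u t → Sub u (.app f ts)

end Term

/-- Ground terms. -/
abbrev GT (F : Type) := Term F Empty

/-- View a ground term as a configuration. -/
def toConf {F Q : Type} (t : GT F) : Term F Q := t.subst (fun e => e.elim)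

/-- Fill a one-hole ground context with anything. -/
def fillC {F X : Type} (C : Term F (Option Empty)) (c : Term F X) : Term F X :=
  C.subst (fun o => Option.elim o c (fun e => e.elim))

/-- Fill a configuration context (leaves are states) with a configuration. -/
def fillS {F Q : Type} (C : Term F (Option Q)) (c : Term F Q) : Term F Q :=
  C.subst (fun o => Option.elim o c Term.var)

/-- A strict subterm. -/
def StrictSub {F V : Type} (u s : Term F V) : Prop :=
  ∃ f ts, s = Term.app f ts ∧ ∃ t ∈ ts, Term.Sub u t

/-! ### Rewriting -/

/-- A set of rules (or equations). -/
abbrev TRS (F V : Type) := Set (Term F V × Term F V)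

/-- Every variable of a right-hand side occurs in the left-hand side. -/
def WfTRS {F V : Type} (R : TRS F V) : Prop :=
  ∀ lr ∈ R, ∀ v ∈ (Prod.snd lr).varsL, v ∈ (Prod.fst lr).varsL

def LeftLinear {F V : Type} (R : TRS F V) : Prop :=
  ∀ lr ∈ R, (Prod.fst lr).varsL.Nodup

/-- One step of (unrestricted) rewriting. -/
inductive Rew {F V : Type} (R : TRS F V) : GT F → GT F → Prop where
  | root {l r : Term F V} (σ : V → GT F) :
      (l, r) ∈ R → Rew R (l.subst σ) (r.subst σ)
  | congr {s t : GT F} (f : F) (ts₁ ts₂ : List (GT F)) :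
      Rew R s t → Rew R (.app f (ts₁ ++ s :: ts₂)) (.app f (ts₁ ++ t :: ts₂))

/-- Normal form. -/
def IsNF {F V : Type} (R : TRS F V) (t : GT F) : Prop := ∀ u, ¬ Rew R t u

/-- One step of innermost rewriting: every strict subterm of the redex is a normal form. -/
inductive InRew {F V : Type} (R : TRS F V) : GT F → GT F → Prop where
  | root {l r : Term F V} (σ : V → GT F) :
      (l, r) ∈ R → (∀ u, StrictSub u (l.subst σ) → IsNF R u) →
      InRew R (l.subst σ) (r.subst σ)
  | congr {s t : GT F} (f : F) (ts₁ ts₂ : List (GT F)) :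
      InRew R s t → InRew R (.app f (ts₁ ++ s :: ts₂)) (.app f (ts₁ ++ t :: ts₂))

/-- One step of rightmost innermost rewriting: additionally all sibling subterms to the
right of the redex are normal forms. -/
inductive RInRew {F V : Type} (R : TRS F V) : GT F → GT F → Prop where
  | root {l r : Term F V} (σ : V → GT F) :
      (l, r) ∈ R → (∀ u, StrictSub u (l.subst σ) → IsNF R u) →
      RInRew R (l.subst σ) (r.subst σ)
  | congr {s t : GT F} (f : F) (ts₁ ts₂ : List (GT F)) :
      RInRew R s t → (∀ u ∈ ts₂, IsNF R u) →
      RInRew R (.app f (ts₁ ++ s :: ts₂)) (.app f (ts₁ ++ t :: ts₂))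

/-- The congruence ≡_E generated by a set of equations. -/
inductive EqE {F V : Type} (E : TRS F V) : GT F → GT F → Prop where
  | eqn {s t : Term F V} (σ : V → GT F) : (s, t) ∈ E → EqE E (s.subst σ) (t.subst σ)
  | refl (t : GT F) : EqE E t t
  | symm {s t : GT F} : EqE E s t → EqE E t s
  | trans {s t u : GT F} : EqE E s t → EqE E t u → EqE E s u
  | congr {s t : GT F} (f : F) (ts₁ ts₂ : List (GT F)) :
      EqE E s t → EqE E (.app f (ts₁ ++ s :: ts₂)) (.app f (ts₁ ++ t :: ts₂))

/-- Terms reachable from a set by (the reflexive-transitive closure of) a relation. -/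
def starRw {α : Type} (Rw : α → α → Prop) (L : Set α) : Set α :=
  {t | ∃ s ∈ L, Relation.ReflTransGen Rw s t}

/-- One step of rewriting modulo E. -/
def RewModE {F V : Type} (Rw : GT F → GT F → Prop) (E : TRS F V) (u v : GT F) : Prop :=
  ∃ u' v', EqE E u u' ∧ Rw u' v' ∧ EqE E v' v

/-- Terms reachable modulo E. -/
def starMod {F V : Type} (Rw : GT F → GT F → Prop) (E : TRS F V) (L : Set (GT F)) :
    Set (GT F) :=
  starRw (RewModE Rw E) L

/-! ### Tree automata -/

structure TA (F Q : Type) where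
  final : Set Q
  delta : Set (F × List Q × Q)
  eps : Set (Q × Q)
  epsR : Set (Q × Q)
  epsE : Set (Q × Q)

namespace TA

def states {F Q : Type} (A : TA F Q) : Set Q :=
  A.final ∪ {q | ∃ f qs q', (f, qs, q') ∈ A.delta ∧ (q = q' ∨ q ∈ qs)} ∪
    {q | ∃ q', (q, q') ∈ A.eps ∪ A.epsR ∪ A.epsE ∨ (q', q) ∈ A.eps ∪ A.epsR ∪ A.epsE}

inductive Move {F Q : Type} (A : TA F Q) : Term F Q → Term F Q → Prop where
  | delta {f qs q} : (f, qs, q) ∈ A.delta → Move A (.app f (qs.map Term.var)) (.var q)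
  | eps {q q'} : (q, q') ∈ A.eps → Move A (.var q) (.var q')
  | epsR {q q'} : (q, q') ∈ A.epsR → Move A (.var q) (.var q')
  | epsE {q q'} : (q, q') ∈ A.epsE → Move A (.var q) (.var q')
  | congr {c c'} (f : F) (l₁ l₂ : List (Term F Q)) :
      Move A c c' → Move A (.app f (l₁ ++ c :: l₂)) (.app f (l₁ ++ c' :: l₂))

def MoveStar {F Q : Type} (A : TA F Q) : Term F Q → Term F Q → Prop :=
  Relation.ReflTransGen A.Move

def Lang {F Q : Type} (A : TA F Q) (q : Q) : Set (GT F) :=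
  {t | A.MoveStar (toConf t) (.var q)}

def LangConf {F Q : Type} (A : TA F Q) (c : Term F Q) : Set (GT F) :=
  {t | A.MoveStar (toConf t) c}

def LangF {F Q : Type} (A : TA F Q) : Set (GT F) :=
  {t | ∃ q ∈ A.final, t ∈ A.Lang q}

/-- Remove all R-colored epsilon transitions. -/
def removeR {F Q : Type} (A : TA F Q) : TA F Q := { A with epsR := ∅ }

def addDelta {F Q : Type} (A : TA F Q) (tr : F × List Q × Q) : TA F Q :=
  { A with delta := insert tr A.delta }

def addDeltaSet {F Q : Type} (A : TA F Q) (N : Set (F × List Q × Q)) : TA F Q :=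
  { A with delta := A.delta ∪ N }

/-- Every elementary configuration is the left-hand side of some transition. -/
def Complete {F Q : Type} (A : TA F Q) : Prop :=
  ∀ (f : F) (qs : List Q), ∃ q, (f, qs, q) ∈ A.delta

def Deterministic {F Q : Type} (A : TA F Q) : Prop :=
  A.eps = ∅ ∧ A.epsR = ∅ ∧ A.epsE = ∅ ∧
    ∀ f qs q q', (f, qs, q) ∈ A.delta → (f, qs, q') ∈ A.delta → q = q'

/-- A state is accessible. -/
def AccSt {F Q : Type} (A : TA F Q) (q : Q) : Prop := ∃ t : GT F, t ∈ A.Lang q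

/-- An automaton is accessible if all of its states are. -/
def Accessible {F Q : Type} (A : TA F Q) : Prop := ∀ q ∈ A.states, A.AccSt q

/-- Prune non-accessible states. -/
def prune {F Q : Type} (A : TA F Q) : TA F Q where
  final := {q | q ∈ A.final ∧ A.AccSt q}
  delta := {tr | tr ∈ A.delta ∧ A.AccSt tr.2.2 ∧ ∀ q ∈ tr.2.1, A.AccSt q}
  eps := {x | x ∈ A.eps ∧ A.AccSt x.1 ∧ A.AccSt x.2}
  epsR := {x | x ∈ A.epsR ∧ A.AccSt x.1 ∧ A.AccSt x.2}
  epsE := {x | x ∈ A.epsE ∧ A.AccSt x.1 ∧ A.AccSt x.2}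

/-- Left projection of a pair automaton. -/
def proj1 {F Q P : Type} (A : TA F (Q × P)) : TA F Q where
  final := Prod.fst '' A.final
  delta := {x | ∃ f qs qp, (f, qs, qp) ∈ A.delta ∧ x = (f, qs.map Prod.fst, qp.1)}
  eps := {x | ∃ a b, (a, b) ∈ A.eps ∧ x = (a.1, b.1)}
  epsR := {x | ∃ a b, (a, b) ∈ A.epsR ∧ x = (a.1, b.1)}
  epsE := {x | ∃ a b, (a, b) ∈ A.epsE ∧ x = (a.1, b.1)}

/-- Right projection of a pair automaton. -/
def proj2 {F Q P : Type} (A : TA F (Q × P)) : TA F P where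
  final := Prod.snd '' A.final
  delta := {x | ∃ f qs qp, (f, qs, qp) ∈ A.delta ∧ x = (f, qs.map Prod.snd, qp.2)}
  eps := {x | ∃ a b, (a, b) ∈ A.eps ∧ x = (a.2, b.2)}
  epsR := {x | ∃ a b, (a, b) ∈ A.epsR ∧ x = (a.2, b.2)}
  epsE := {x | ∃ a b, (a, b) ∈ A.epsE ∧ x = (a.2, b.2)}

/-- Product automaton. -/
def prod {F Q P : Type} (A : TA F Q) (B : TA F P) : TA F (Q × P) where
  final := {qp | qp.1 ∈ A.final ∧ qp.2 ∈ B.final}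
  delta := {x | ∃ f qs ps q p, (f, qs, q) ∈ A.delta ∧ (f, ps, p) ∈ B.delta ∧
      qs.length = ps.length ∧ x = (f, qs.zip ps, (q, p))}
  eps := {x | (∃ q q' p, (q, q') ∈ A.eps ∧ x = ((q, p), (q', p))) ∨
      (∃ p p' q, (p, p') ∈ B.eps ∧ x = ((q, p), (q, p')))}
  epsR := {x | (∃ q q' p, (q, q') ∈ A.epsR ∧ x = ((q, p), (q', p))) ∨
      (∃ p p' q, (p, p') ∈ B.epsR ∧ x = ((q, p), (q, p')))}
  epsE := {x | (∃ q q' p, (q, q') ∈ A.epsE ∧ x = ((q, p), (q', p))) ∨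
      (∃ p p' q, (p, p') ∈ B.epsE ∧ x = ((q, p), (q, p')))}

end TA

/-! ### The automaton of normal forms, consistency -/

/-- Instantiation of a term by a state substitution. -/
def substS {F V Q : Type} (σ : V → Q) (t : Term F V) : Term F Q :=
  t.subst (fun v => Term.var (σ v))

/-- Right projection of a configuration of a pair automaton. -/
def conf2 {F Q P : Type} (c : Term F (Q × P)) : Term F P :=
  c.subst (fun s => Term.var s.2)

/-- `B` is the automaton `A_IRR(R)` with reducible-state `pred`. -/
structure IsNFAuto {F V P : Type} (R : TRS F V) (B : TA F P) (pred : P) : Prop where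
  det : B.Deterministic
  complete : B.Complete
  final_eq : B.final = {p | p ≠ pred}
  lang_pred : B.Lang pred = {t | ¬ IsNF R t}
  lang_nf : ∀ p, p ≠ pred → B.Lang p ⊆ {t | IsNF R t}

/-- Consistency of a pair automaton with `B` (i.e. with `A_IRR(R)`). -/
def Consistent {F Q P : Type} (A : TA F (Q × P)) (B : TA F P) : Prop :=
  ∀ (c : Term F (Q × P)) (q : Q) (p : P),
    A.MoveStar c (.var (q, p)) → B.MoveStar (conf2 c) (.var p)

/-! ### Innermost critical pairs, normalisation, completion -/

/-- Innermost critical pair `(l → r, σ, qp)` of the pair automaton `A`. -/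
def CriticalPair {F V Q P : Type} (R : TRS F V) (pred : P) (A : TA F (Q × P))
    (l r : Term F V) (σ : V → Q × P) (qp : Q × P) : Prop :=
  (l, r) ∈ R ∧
  A.MoveStar (substS σ l) (.var qp) ∧
  (∀ p', ¬ A.MoveStar (substS σ r) (.var (qp.1, p'))) ∧
  ∀ f ts, substS σ l = .app f ts →
    ∃ qs : List (Q × P),
      List.Forall₂ (fun c s => A.MoveStar c (Term.var s)) ts qs ∧
      A.MoveStar (.app f (qs.map Term.var)) (.var qp) ∧
      ∀ s ∈ qs, s.2 ≠ pred

/-- `NormRel B A c q N`: `N` is a possible result of the normalisation `Norm_A(c, q)`,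
where the right components of new states are determined by `B = A_IRR(R)`. -/
inductive NormRel {F Q P : Type} (B : TA F P) :
    TA F (Q × P) → Term F (Q × P) → (Q × P) → Set (F × List (Q × P) × (Q × P)) → Prop where
  | base (A : TA F (Q × P)) (f : F) (qs : List (Q × P)) (q : Q × P) :
      NormRel B A (.app f (qs.map Term.var)) q {(f, qs, q)}
  | step (A : TA F (Q × P)) (C : Term F (Option (Q × P))) (f : F) (qs : List (Q × P))
      (q q' : Q × P) (N : Set (F × List (Q × P) × (Q × P))) :
      C.holes = 1 → C ≠ .var none →
      ((f, qs, q') ∈ A.delta ∨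
        (q' ∉ A.states ∧ (f, qs.map Prod.snd, q'.2) ∈ B.delta ∧
          ∀ q'', (f, qs, q'') ∉ A.delta)) →
      NormRel B (A.addDelta (f, qs, q')) (fillS C (.var q')) q N →
      NormRel B A (fillS C (.app f (qs.map Term.var))) q (insert (f, qs, q') N)

-- Closure of a set of transitions under the supplementary operations seeded by the
-- replacement `(q₀, pr) ↦ (q₀, pn)`, together with the generated replacement pairs.
mutual
  inductive SuppTrans {F Q P : Type} (B : TA F P) (Δ : Set (F × List (Q × P) × (Q × P)))
      (q₀ : Q) (pr pn : P) : F → List (Q × P) → (Q × P) → Prop where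
    | base {f qs qp} : (f, qs, qp) ∈ Δ → SuppTrans B Δ q₀ pr pn f qs qp
    | supp {f : F} {l₁ l₂ : List (Q × P)} {q : Q} {p p' : P} {q'' : Q} {p'' p''' : P} :
        SuppTrans B Δ q₀ pr pn f (l₁ ++ (q, p) :: l₂) (q'', p'') →
        SuppRepl B Δ q₀ pr pn (q, p) (q, p') →
        (f, l₁.map Prod.snd ++ p' :: l₂.map Prod.snd, p''') ∈ B.delta →
        SuppTrans B Δ q₀ pr pn f (l₁ ++ (q, p') :: l₂) (q'', p''')
  inductive SuppRepl {F Q P : Type} (B : TA F P) (Δ : Set (F × List (Q × P) × (Q × P)))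
      (q₀ : Q) (pr pn : P) : (Q × P) → (Q × P) → Prop where
    | init : SuppRepl B Δ q₀ pr pn (q₀, pr) (q₀, pn)
    | step {f : F} {l₁ l₂ : List (Q × P)} {q : Q} {p p' : P} {q'' : Q} {p'' p''' : P} :
        SuppTrans B Δ q₀ pr pn f (l₁ ++ (q, p) :: l₂) (q'', p'') →
        SuppRepl B Δ q₀ pr pn (q, p) (q, p') →
        (f, l₁.map Prod.snd ++ p' :: l₂.map Prod.snd, p''') ∈ B.delta →
        SuppRepl B Δ q₀ pr pn (q'', p'') (q'', p''')
end

-- Rightmost-restricted supplementary operations: a supplementary transition is added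
-- only if the arguments to the right of the replaced one can be given right components
-- different from `pr` (choosing existing states of the automaton, states in `S`).
mutual
  inductive SuppTransR {F Q P : Type} (B : TA F P) (S : Set (Q × P))
      (Δ : Set (F × List (Q × P) × (Q × P))) (q₀ : Q) (pr pn : P) :
      F → List (Q × P) → (Q × P) → Prop where
    | base {f qs qp} : (f, qs, qp) ∈ Δ → SuppTransR B S Δ q₀ pr pn f qs qp
    | supp {f : F} {l₁ l₂ l₂' : List (Q × P)} {q : Q} {p p' : P} {q'' : Q} {p'' p''' : P} :
        SuppTransR B S Δ q₀ pr pn f (l₁ ++ (q, p) :: l₂) (q'', p'') →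
        SuppReplR B S Δ q₀ pr pn (q, p) (q, p') →
        List.Forall₂ (fun s s' : Q × P => s.1 = s'.1 ∧ s'.2 ≠ pr ∧ s' ∈ S) l₂ l₂' →
        (f, l₁.map Prod.snd ++ p' :: l₂'.map Prod.snd, p''') ∈ B.delta →
        SuppTransR B S Δ q₀ pr pn f (l₁ ++ (q, p') :: l₂') (q'', p''')
  inductive SuppReplR {F Q P : Type} (B : TA F P) (S : Set (Q × P))
      (Δ : Set (F × List (Q × P) × (Q × P))) (q₀ : Q) (pr pn : P) :
      (Q × P) → (Q × P) → Prop where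
    | init : SuppReplR B S Δ q₀ pr pn (q₀, pr) (q₀, pn)
    | step {f : F} {l₁ l₂ l₂' : List (Q × P)} {q : Q} {p p' : P} {q'' : Q} {p'' p''' : P} :
        SuppTransR B S Δ q₀ pr pn f (l₁ ++ (q, p) :: l₂) (q'', p'') →
        SuppReplR B S Δ q₀ pr pn (q, p) (q, p') →
        List.Forall₂ (fun s s' : Q × P => s.1 = s'.1 ∧ s'.2 ≠ pr ∧ s' ∈ S) l₂ l₂' →
        (f, l₁.map Prod.snd ++ p' :: l₂'.map Prod.snd, p''') ∈ B.delta →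
        SuppReplR B S Δ q₀ pr pn (q'', p'') (q'', p''')
end

/-- Completion of the innermost critical pair `(l → r, σ, (q, pred))`: normalisation of
`rσ` into a new state `(q', prσ)`, addition of the R-colored epsilon transition
`(q', prσ) →^R (q, prσ)` (or only `rσ →^R (q, prσ)` if `rσ` is trivial), and closure
under the supplementary operations. -/
def ResolveCP {F V Q P : Type} (B : TA F P) (pred : P) (A : TA F (Q × P))
    (l r : Term F V) (σ : V → Q × P) (q : Q) (prσ : P) (A' : TA F (Q × P)) : Prop :=
  B.MoveStar (conf2 (substS σ r)) (.var prσ) ∧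
  ∃ (Δ₁ : Set (F × List (Q × P) × (Q × P))) (εR : Set ((Q × P) × (Q × P))),
    ((∃ x, r = Term.var x ∧ Δ₁ = A.delta ∧ εR = {(σ x, (q, prσ))}) ∨
     ((∀ x, r ≠ Term.var x) ∧
        ∃ (qn : Q × P) (N : Set (F × List (Q × P) × (Q × P))),
          qn ∉ A.states ∧ qn.2 = prσ ∧
          NormRel B A (substS σ r) qn N ∧ Δ₁ = A.delta ∪ N ∧ εR = {(qn, (q, prσ))})) ∧
    A' = { final := A.final, eps := A.eps, epsE := A.epsE, epsR := A.epsR ∪ εR,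
           delta := {tr | SuppTrans B Δ₁ q pred prσ tr.1 tr.2.1 tr.2.2} }

/-- Rightmost-adapted completion of an innermost critical pair. -/
def ResolveCPR {F V Q P : Type} (B : TA F P) (pred : P) (A : TA F (Q × P))
    (l r : Term F V) (σ : V → Q × P) (q : Q) (prσ : P) (A' : TA F (Q × P)) : Prop :=
  B.MoveStar (conf2 (substS σ r)) (.var prσ) ∧
  ∃ (Δ₁ : Set (F × List (Q × P) × (Q × P))) (εR : Set ((Q × P) × (Q × P))),
    ((∃ x, r = Term.var x ∧ Δ₁ = A.delta ∧ εR = {(σ x, (q, prσ))}) ∨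
     ((∀ x, r ≠ Term.var x) ∧
        ∃ (qn : Q × P) (N : Set (F × List (Q × P) × (Q × P))),
          qn ∉ A.states ∧ qn.2 = prσ ∧
          NormRel B A (substS σ r) qn N ∧ Δ₁ = A.delta ∪ N ∧ εR = {(qn, (q, prσ))})) ∧
    A' = { final := A.final, eps := A.eps, epsE := A.epsE, epsR := A.epsR ∪ εR,
           delta := {tr | SuppTransR B
             (TA.states { final := A.final, eps := A.eps, epsE := A.epsE,
                          epsR := A.epsR ∪ εR, delta := Δ₁ })
             Δ₁ q pred prσ tr.1 tr.2.1 tr.2.2} }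

/-! ### Equations -/

/-- Situation of application of the equation `s = t` in `A`. -/
def Situation {F V Q P : Type} (E : TRS F V) (A : TA F (Q × P)) (s t : Term F V)
    (θ : V → Q × P) (q₁ q₂ : Q) (p : P) : Prop :=
  (s, t) ∈ E ∧
  A.MoveStar (substS θ s) (.var (q₁, p)) ∧
  A.MoveStar (substS θ t) (.var (q₂, p)) ∧
  ¬(((q₁, p), (q₂, p)) ∈ A.epsE ∧ ((q₂, p), (q₁, p)) ∈ A.epsE)

/-- Application of an equation: add the two E-colored epsilon transitions between
`(q₁, p)` and `(q₂, p)` and the supplementary ones for the other right components. -/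
def ApplyEq {F Q P : Type} (A : TA F (Q × P)) (q₁ q₂ : Q) (p : P) : TA F (Q × P) :=
  { A with epsE := A.epsE ∪
      {x | ∃ p', (p' = p ∨ ((q₁, p') ∈ A.states ∧ (q₂, p') ∈ A.states)) ∧
        (x = ((q₁, p'), (q₂, p')) ∨ x = ((q₂, p'), (q₁, p')))} }

inductive EqStep {F V Q P : Type} (E : TRS F V) : TA F (Q × P) → TA F (Q × P) → Prop where
  | mk {A : TA F (Q × P)} {s t : Term F V} {θ : V → Q × P} {q₁ q₂ : Q} {p : P} :
      Situation E A s t θ q₁ q₂ p → EqStep E A (ApplyEq A q₁ q₂ p)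

/-- Equational simplification: apply equations until no situation of application remains. -/
def Simplified {F V Q P : Type} (E : TRS F V) (A A' : TA F (Q × P)) : Prop :=
  Relation.ReflTransGen (EqStep E) A A' ∧
    ∀ (s t : Term F V) (θ : V → Q × P) (q₁ q₂ : Q) (p : P), ¬ Situation E A' s t θ q₁ q₂ p

/-! ### Completion steps -/

inductive CompStep {F V Q P : Type} (R E : TRS F V) (B : TA F P) (pred : P) :
    TA F (Q × P) → TA F (Q × P) → Prop where
  | cp {A A' : TA F (Q × P)} {l r : Term F V} {σ : V → Q × P} {qp : Q × P} {prσ : P} :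
      CriticalPair R pred A l r σ qp → ResolveCP B pred A l r σ qp.1 prσ A' →
      CompStep R E B pred A A'
  | eq {A A' : TA F (Q × P)} : EqStep E A A' → CompStep R E B pred A A'

/-- Some steps of innermost equational completion. -/
def Completion {F V Q P : Type} (R E : TRS F V) (B : TA F P) (pred : P) :
    TA F (Q × P) → TA F (Q × P) → Prop :=
  Relation.ReflTransGen (CompStep R E B pred)

inductive CompStepR {F V Q P : Type} (R E : TRS F V) (B : TA F P) (pred : P) :
    TA F (Q × P) → TA F (Q × P) → Prop where
  | cp {A A' : TA F (Q × P)} {l r : Term F V} {σ : V → Q × P} {qp : Q × P} {prσ : P} :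
      CriticalPair R pred A l r σ qp → ResolveCPR B pred A l r σ qp.1 prσ A' →
      CompStepR R E B pred A A'
  | eq {A A' : TA F (Q × P)} : EqStep E A A' → CompStepR R E B pred A A'

/-- Some steps of innermost equational completion adapted for the rightmost strategy. -/
def CompletionR {F V Q P : Type} (R E : TRS F V) (B : TA F P) (pred : P) :
    TA F (Q × P) → TA F (Q × P) → Prop :=
  Relation.ReflTransGen (CompStepR R E B pred)

/-! ### Correctness and coherence -/

/-- Correctness of a pair automaton w.r.t. a one-step rewriting relation `Rw`
(`Rw = InRew R` for innermost, `Rw = RInRew R` for rightmost innermost). -/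
def CorrectAutoGen {F V Q P : Type} (R : TRS F V) (Rw : GT F → GT F → Prop) (pred : P)
    (A : TA F (Q × P)) : Prop :=
  ∀ q : Q, (q, pred) ∈ A.states →
    ∀ u ∈ A.Lang (q, pred), ∀ v, Rw u v →
      (∃ p : P, v ∈ A.Lang (q, p)) ∨
      (∃ (l r : Term F V) (σ : V → Q × P) (q₀ : Q) (p₀ : P) (C : Term F (Option Empty)),
        CriticalPair R pred A l r σ (q₀, p₀) ∧ C.holes = 1 ∧
        A.MoveStar (toConf u) (fillC C (substS σ l)) ∧
        A.MoveStar (fillC C (substS σ l)) (fillC C (.var (q₀, pred))) ∧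
        A.MoveStar (fillC C (.var (q₀, pred))) (.var (q, pred)) ∧
        A.MoveStar (toConf v) (fillC C (substS σ r)))

def CorrectAuto {F V Q P : Type} (R : TRS F V) (pred : P) (A : TA F (Q × P)) : Prop :=
  CorrectAutoGen R (InRew R) pred A

def CorrectAutoR {F V Q P : Type} (R : TRS F V) (pred : P) (A : TA F (Q × P)) : Prop :=
  CorrectAutoGen R (RInRew R) pred A

/-- `A` separates the classes of `E`. -/
def SeparatesE {F V Q P : Type} (E : TRS F V) (A : TA F (Q × P)) : Prop :=
  ∀ q : Q, (∃ p, (q, p) ∈ A.states) →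
    ∃ s : GT F, ∀ p, A.Lang (q, p) ⊆ {t | EqE E s t}

/-- Total separation of the classes of `E`. -/
def TotallySeparates {F V Q P : Type} (E : TRS F V) (A : TA F (Q × P)) : Prop :=
  SeparatesE E A ∧ A.proj1.Accessible

/-- `s` is a representative of the class `[q]^A_E` (the class of the terms recognized
by states with left component `q`). -/
def ClassRep {F V Q P : Type} (E : TRS F V) (A : TA F (Q × P)) (q : Q) (s : GT F) : Prop :=
  ∃ p t, t ∈ A.Lang (q, p) ∧ EqE E t s

/-- `R_in/E`-coherence (generic in the one-step rewriting relation `Rw`). -/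
def Coherent {F V Q P : Type} (Rw : GT F → GT F → Prop) (E : TRS F V)
    (A : TA F (Q × P)) : Prop :=
  TotallySeparates E A.removeR ∧ A.Accessible ∧
    ∀ q p, (q, p) ∈ A.states → ∀ s, ClassRep E A.removeR q s →
      A.Lang (q, p) ⊆ starMod Rw E {t | EqE E s t}

@[simp]
lemma conf2_var {F Q P : Type} (qp : Q × P) :
    conf2 (Term.var qp : Term F (Q × P)) = .var qp.2 := by
  simp [conf2, Term.subst]

@[simp]
lemma conf2_app {F Q P : Type} (f : F) (ts : List (Term F (Q × P))) :
    conf2 (.app f ts) = .app f (ts.map conf2) := by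
  simp [conf2, Term.subst]

lemma TA.MoveStar.congr {F Q : Type} {A : TA F Q} {c c' : Term F Q} (h : A.MoveStar c c')
    (f : F) (l₁ l₂ : List (Term F Q)) :
    A.MoveStar (.app f (l₁ ++ c :: l₂)) (.app f (l₁ ++ c' :: l₂)) :=
  Relation.ReflTransGen.lift (p := A.Move) (fun d => Term.app f (l₁ ++ d :: l₂))
    (fun _ _ => TA.Move.congr f l₁ l₂) _ _ h

lemma consistent_of_move_conf2 {F Q P : Type} {A : TA F (Q × P)} {B : TA F P}
    (h : ∀ c c', A.Move c c' → B.MoveStar (conf2 c) (conf2 c')) : Consistent A B :=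
  fun _ _ _ hc => by
    simpa only [TA.MoveStar, Function.onFun, conf2_var] using
      Relation.ReflTransGen.lift' conf2 h _ _ hc

-- The added transitions project to trivial moves of `B`.
lemma Consistent.union_epsE {F Q P : Type} {A : TA F (Q × P)} {B : TA F P}
    (hA : Consistent A B) {S : Set ((Q × P) × (Q × P))} (hS : ∀ x ∈ S, x.1.2 = x.2.2) :
    Consistent { A with epsE := A.epsE ∪ S } B := by
  refine consistent_of_move_conf2 fun c c' h => ?_
  induction h with
  | delta h => simpa only [conf2_var] using hA _ _ _ (.single (.delta h))
  | eps h => simpa only [conf2_var] using hA _ _ _ (.single (.eps h))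
  | epsR h => simpa only [conf2_var] using hA _ _ _ (.single (.epsR h))
  | @epsE q q' h =>
    rcases h with h | h
    · simpa only [conf2_var] using hA _ _ _ (.single (.epsE h))
    · rw [conf2_var, conf2_var, show q.2 = q'.2 from hS _ h]
      exact .refl
  | congr f l₁ l₂ _ ih =>
    simpa only [conf2_app, List.map_append, List.map_cons] using ih.congr f _ _

/-- applying an equation preserves consistency with `A_IRR(R)`. -/
theorem stmt2 {F V Q P : Type} (R E : TRS F V) (hlin : LeftLinear R)
    (B : TA F P) (pred : P) (hB : IsNFAuto R B pred)
    (A : TA F (Q × P)) (hA : Consistent A B)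
    (s t : Term F V) (θ : V → Q × P) (q₁ q₂ : Q) (p : P)
    (hsit : Situation E A s t θ q₁ q₂ p) :
    Consistent (ApplyEq A q₁ q₂ p) B :=
  hA.union_epsE (by rintro x ⟨p', -, rfl | rfl⟩ <;> rfl)

end TAC
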